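/- Let g(x) = Σ_{j=0}^{d} g_j x^j ∈ ℂ[x] be a nonzero polynomial all of whose complex roots have absolute value at least 1, let k be an integer with k > d (strictly), let λ ∈ ℂ with |λ| = 1, and set f(x) = λ x^k · ḡ(x^{-1}) = λ Σ_{j=0}^{d} conj(g_j) x^{k-j}. Then for any α, β ∈ ℂ not both zero, m(α f + β g) = m(g) + log max{|α|, |β|}. -/

import Mathlib

open MeasureTheory Real Complex Polynomial

noncomputable def circ (t : ℝ) : ℂ := Complex.exp (t * Complex.I)

/-!
For `|z| < 1` one has `|f(z)| < |g(z)|`: writing `g = c ∏ (x - a)`, we get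
`|f(z)| = |z|^(k-d) |c| ∏ |1 - ā z|`, and `|1 - ā z| ≤ |z - a|` because `|a| ≥ 1`; the factor
`|z|^(k-d)` with `k > d` makes the inequality strict (and `f(0) = 0`). So if `|α| ≤ |β|`, the
polynomial `αf + βg` has no zero in the open unit disc, and Jensen's formula gives
`m(αf + βg) = log |β g(0)| = log |β| + m(g)`. If `|α| > |β|`, then on the unit circle
`f = λ zᵏ ḡ` and `|αf + βg| = |β̄ f + ᾱ g|`, which reduces to the first case.
-/

open ComplexConjugate

lemma norm_multiset_prod {R : Type*} [SeminormedCommRing R] [NormOneClass R] [NormMulClass R]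
    (s : Multiset R) : ‖s.prod‖ = (s.map (‖·‖)).prod :=
  map_multiset_prod (normHom : R →*₀ ℝ) s

lemma logMahlerMeasure_eq_circ_average (p : ℂ[X]) :
    (1 / (2 * π)) * ∫ θ in (0:ℝ)..(2 * π), Real.log ‖p.eval (circ θ)‖ = p.logMahlerMeasure := by
  simp [logMahlerMeasure_def, circleAverage_def, circleMap, circ]

/-- The integral `∫ θ in …, F θ + c` extends over the constant `c`, as on the right-hand side of
the main theorem. -/
lemma logMahlerMeasure_add_const_eq_circ_average (p : ℂ[X]) (c : ℝ) :
    (1 / (2 * π)) * ∫ θ in (0:ℝ)..(2 * π), (Real.log ‖p.eval (circ θ)‖ + c)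
      = p.logMahlerMeasure + c := by
  have hint : IntervalIntegrable (fun θ => Real.log ‖p.eval (circ θ)‖) volume 0 (2 * π) := by
    simpa [circleMap, circ] using p.intervalIntegrable_mahlerMeasure
  rw [intervalIntegral.integral_add hint intervalIntegrable_const, mul_add,
    logMahlerMeasure_eq_circ_average, intervalIntegral.integral_const, smul_eq_mul]
  field_simp
  ring

lemma logMahlerMeasure_congr_of_norm_eval_eq {p q : ℂ[X]}
    (h : ∀ z : ℂ, ‖z‖ = 1 → ‖p.eval z‖ = ‖q.eval z‖) :
    p.logMahlerMeasure = q.logMahlerMeasure :=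
  circleAverage_congr_sphere fun z hz => by simp [h z (by simpa using hz)]

theorem logMahlerMeasure_eq_log_norm_eval_zero {p : ℂ[X]}
    (hp : ∀ z : ℂ, p.eval z = 0 → 1 ≤ ‖z‖) : p.logMahlerMeasure = Real.log ‖p.eval 0‖ := by
  have hp0 : p ≠ 0 := fun h => absurd (hp 0 (by simp [h])) (by norm_num)
  have hroots : ∀ a ∈ p.roots, 1 ≤ ‖a‖ := fun a ha => hp a (mem_roots'.mp ha).2
  have hne : ∀ x ∈ p.roots.map (‖·‖), x ≠ 0 := by
    simp only [Multiset.mem_map]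
    rintro _ ⟨a, ha, rfl⟩
    linarith [hroots a ha]
  have hnorm : ‖(p.roots.map (0 - ·)).prod‖ = (p.roots.map (‖·‖)).prod := by
    simp [norm_multiset_prod]
  rw [logMahlerMeasure_eq_log_leadingCoeff_add_sum_log_roots,
    (IsAlgClosed.splits p).eval_eq_prod_roots, norm_mul, hnorm,
    Real.log_mul (by simpa using hp0) (Multiset.prod_ne_zero fun h => hne 0 h rfl),
    Real.log_multiset_prod hne, Multiset.map_map]
  congr 2
  exact Multiset.map_congr rfl fun a ha => posLog_eq_log (by simpa using hroots a ha)

lemma norm_one_sub_conj_mul_le_norm_sub {a z : ℂ} (ha : 1 ≤ ‖a‖) (hz : ‖z‖ ≤ 1) :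
    ‖1 - conj a * z‖ ≤ ‖z - a‖ := by
  have key : ‖z - a‖ ^ 2 - ‖1 - conj a * z‖ ^ 2 = (‖a‖ ^ 2 - 1) * (1 - ‖z‖ ^ 2) := by
    simp only [Complex.sq_norm, Complex.normSq_apply, Complex.sub_re, Complex.sub_im,
      Complex.mul_re, Complex.mul_im, Complex.conj_re, Complex.conj_im, Complex.one_re,
      Complex.one_im]
    ring
  have hprod : 0 ≤ (‖a‖ ^ 2 - 1) * (1 - ‖z‖ ^ 2) :=
    mul_nonneg (by nlinarith) (by nlinarith [norm_nonneg z])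
  exact le_of_pow_le_pow_left₀ two_ne_zero (norm_nonneg _) (by linarith)

lemma norm_mul_norm_inv_conj_sub (a : ℂ) {z : ℂ} (hz : z ≠ 0) :
    ‖z‖ * ‖(conj z)⁻¹ - a‖ = ‖1 - conj a * z‖ := by
  have hz' : conj z ≠ 0 := by simpa using hz
  rw [← norm_conj z, ← norm_mul, mul_sub, mul_inv_cancel₀ hz', ← norm_conj (1 - conj a * z)]
  simp [mul_comm]

/-- Root by root, `|z| |1/z̄ - a| = |1 - ā z| ≤ |z - a|`. -/
lemma norm_pow_natDegree_mul_norm_eval_inv_conj_le {g : ℂ[X]}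
    (hg : ∀ z : ℂ, g.eval z = 0 → 1 ≤ ‖z‖) {z : ℂ} (hz0 : z ≠ 0) (hz : ‖z‖ ≤ 1) :
    ‖z‖ ^ g.natDegree * ‖g.eval (conj z)⁻¹‖ ≤ ‖g.eval z‖ := by
  have hsplit := IsAlgClosed.splits g
  have hroots : ∀ a ∈ g.roots, 1 ≤ ‖a‖ := fun a ha => hg a (mem_roots'.mp ha).2
  have hfactor : ‖z‖ ^ g.natDegree * ‖g.eval (conj z)⁻¹‖
      = ‖g.leadingCoeff‖ * (g.roots.map fun a => ‖1 - conj a * z‖).prod := by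
    rw [hsplit.eval_eq_prod_roots, norm_mul, norm_multiset_prod, hsplit.natDegree_eq_card_roots,
      ← Multiset.prod_replicate, ← Multiset.map_const', Multiset.map_map, mul_left_comm,
      ← Multiset.prod_map_mul]
    simp only [Function.comp_apply, norm_mul_norm_inv_conj_sub _ hz0]
  rw [hfactor, hsplit.eval_eq_prod_roots z, norm_mul, norm_multiset_prod, Multiset.map_map]
  gcongr
  exact Multiset.prod_map_le_prod_map₀ _ _ (fun _ _ => norm_nonneg _)
    fun a ha => norm_one_sub_conj_mul_le_norm_sub (hroots a ha) hz

lemma norm_add_conj_swap {u : ℂ} (hu : ‖u‖ = 1) (α β w : ℂ) :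
    ‖α * (u * conj w) + β * w‖ = ‖conj β * (u * conj w) + conj α * w‖ := by
  have hu' : u * conj u = 1 := by
    rw [Complex.mul_conj, Complex.normSq_eq_norm_sq, hu]
    simp
  have hswap : conj β * (u * conj w) + conj α * w = u * conj (α * (u * conj w) + β * w) := by
    simp only [map_add, map_mul, conj_conj]
    linear_combination (-(conj α * w)) * hu'
  rw [hswap, norm_mul, hu, one_mul, norm_conj]

/-- The polynomial `xᵏ ḡ(1/x)`, written through the coefficients of `g`. -/
noncomputable def conjReciprocal (k : ℕ) (g : ℂ[X]) : ℂ[X] :=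
  ∑ j ∈ Finset.range (g.natDegree + 1), C (conj (g.coeff j)) * X ^ (k - j)

section conjReciprocal

variable {g : ℂ[X]} {k : ℕ}

lemma eval_conjReciprocal (hk : g.natDegree ≤ k) {z : ℂ} (hz : z ≠ 0) :
    (conjReciprocal k g).eval z = z ^ k * conj (g.eval (conj z)⁻¹) := by
  rw [conjReciprocal, eval_finsetSum, eval_eq_sum_range, map_sum, Finset.mul_sum]
  refine Finset.sum_congr rfl fun j hj => ?_
  have hjk : j ≤ k := by have := Finset.mem_range.mp hj; omega
  simp only [eval_mul, eval_C, eval_pow, eval_X, map_mul, map_pow, map_inv₀, conj_conj,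
    pow_sub₀ z hz hjk, inv_pow]
  ring

lemma eval_zero_conjReciprocal (hk : g.natDegree < k) : (conjReciprocal k g).eval 0 = 0 := by
  rw [conjReciprocal, eval_finsetSum]
  refine Finset.sum_eq_zero fun j hj => ?_
  have hjk : k - j ≠ 0 := by have := Finset.mem_range.mp hj; omega
  simp [zero_pow hjk]

lemma norm_eval_conjReciprocal_lt (hg : ∀ z : ℂ, g.eval z = 0 → 1 ≤ ‖z‖)
    (hk : g.natDegree < k) {z : ℂ} (hz : ‖z‖ < 1) :
    ‖(conjReciprocal k g).eval z‖ < ‖g.eval z‖ := by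
  have hgz : 0 < ‖g.eval z‖ := norm_pos_iff.mpr fun h => (hg z h).not_gt hz
  rcases eq_or_ne z 0 with rfl | hz0
  · simpa [eval_zero_conjReciprocal hk] using hgz
  calc ‖(conjReciprocal k g).eval z‖
      = ‖z‖ ^ (k - g.natDegree) * (‖z‖ ^ g.natDegree * ‖g.eval (conj z)⁻¹‖) := by
        rw [eval_conjReciprocal hk.le hz0, norm_mul, norm_pow, norm_conj, ← mul_assoc,
          ← pow_add, Nat.sub_add_cancel hk.le]
    _ ≤ ‖z‖ ^ (k - g.natDegree) * ‖g.eval z‖ := by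
        gcongr
        exact norm_pow_natDegree_mul_norm_eval_inv_conj_le hg hz0 hz.le
    _ < ‖g.eval z‖ :=
        mul_lt_of_lt_one_left hgz (pow_lt_one₀ (norm_nonneg z) hz (by omega))

/-- On the unit circle `f = λ zᵏ ḡ(z)`, so `ᾱ g + β̄ f = λ zᵏ · conj (α f + β g)`. -/
lemma norm_eval_conj_swap (hk : g.natDegree ≤ k) {lam : ℂ} (hlam : ‖lam‖ = 1) (α β : ℂ)
    {z : ℂ} (hz : ‖z‖ = 1) :
    ‖(C α * (C lam * conjReciprocal k g) + C β * g).eval z‖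
      = ‖(C (conj β) * (C lam * conjReciprocal k g) + C (conj α) * g).eval z‖ := by
  have hz0 : z ≠ 0 := norm_ne_zero_iff.mp (by simp [hz])
  have hfz : (C lam * conjReciprocal k g).eval z = lam * z ^ k * conj (g.eval z) := by
    rw [eval_mul, eval_C, eval_conjReciprocal hk hz0, ← inv_eq_conj hz, inv_inv, mul_assoc]
  simp only [eval_add, eval_mul, eval_C, hfz]
  exact norm_add_conj_swap (by simp [hlam, hz]) α β _

lemma logMahlerMeasure_add_of_norm_le (hg : ∀ z : ℂ, g.eval z = 0 → 1 ≤ ‖z‖)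
    (hk : g.natDegree < k) {lam : ℂ} (hlam : ‖lam‖ = 1) {α β : ℂ} (hβ : β ≠ 0)
    (hαβ : ‖α‖ ≤ ‖β‖) :
    (C α * (C lam * conjReciprocal k g) + C β * g).logMahlerMeasure
      = g.logMahlerMeasure + Real.log ‖β‖ := by
  set f := C lam * conjReciprocal k g
  have hfg : ∀ z : ℂ, ‖z‖ < 1 → ‖f.eval z‖ < ‖g.eval z‖ := fun z hz => by
    simpa [f, hlam] using norm_eval_conjReciprocal_lt hg hk hz
  have hroots : ∀ z : ℂ, (C α * f + C β * g).eval z = 0 → 1 ≤ ‖z‖ := by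
    intro z hz
    by_contra! hz1
    have hnorm : ‖α‖ * ‖f.eval z‖ = ‖β‖ * ‖g.eval z‖ := by
      have hsum : α * f.eval z = -(β * g.eval z) :=
        eq_neg_of_add_eq_zero_left (by simpa using hz)
      rw [← norm_mul, ← norm_mul, hsum, norm_neg]
    have := mul_le_mul_of_nonneg_right hαβ (norm_nonneg (f.eval z))
    have := mul_lt_mul_of_pos_left (hfg z hz1) (norm_pos_iff.mpr hβ)
    linarith
  have hg0 : g.eval 0 ≠ 0 := fun h => absurd (hg 0 h) (by norm_num)
  rw [logMahlerMeasure_eq_log_norm_eval_zero hroots, logMahlerMeasure_eq_log_norm_eval_zero hg]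
  simp only [eval_add, eval_mul, eval_C, f, eval_zero_conjReciprocal hk, mul_zero, zero_add,
    norm_mul, Real.log_mul (norm_ne_zero_iff.mpr hβ) (norm_ne_zero_iff.mpr hg0), add_comm]

end conjReciprocal

theorem mahler_alpha_f_add_beta_g_general (g f : Polynomial ℂ)
    (hroots : ∀ z : ℂ, g.eval z = 0 → 1 ≤ ‖z‖)
    (k : ℕ) (hk : g.natDegree < k) (lam : ℂ) (hlam : ‖lam‖ = 1)
    (hf : f = Polynomial.C lam *
      ∑ j ∈ Finset.range (g.natDegree + 1),
        Polynomial.C ((starRingEnd ℂ) (g.coeff j)) * Polynomial.X ^ (k - j))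
    (α β : ℂ) (hαβ : ¬(α = 0 ∧ β = 0)) :
    (1 / (2 * Real.pi)) *
        ∫ θ in (0:ℝ)..(2 * Real.pi),
          Real.log (‖(Polynomial.C α * f + Polynomial.C β * g).eval (circ θ)‖)
      = (1 / (2 * Real.pi)) *
          ∫ θ in (0:ℝ)..(2 * Real.pi), Real.log (‖g.eval (circ θ)‖)
        + Real.log (max (‖α‖) (‖β‖)) := by
  obtain rfl : f = C lam * conjReciprocal k g := hf
  rw [logMahlerMeasure_eq_circ_average, logMahlerMeasure_add_const_eq_circ_average]
  rcases le_or_gt ‖α‖ ‖β‖ with hle | hlt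
  · have hβ : β ≠ 0 := by
      rintro rfl
      exact hαβ ⟨norm_le_zero_iff.mp (by simpa using hle), rfl⟩
    rw [max_eq_right hle]
    exact logMahlerMeasure_add_of_norm_le hroots hk hlam hβ hle
  · have hα : conj α ≠ 0 := by
      simpa using norm_pos_iff.mp ((norm_nonneg β).trans_lt hlt)
    rw [max_eq_left hlt.le, logMahlerMeasure_congr_of_norm_eval_eq
      (fun z hz => norm_eval_conj_swap hk.le hlam α β hz), ← norm_conj α]
    exact logMahlerMeasure_add_of_norm_le hroots hk hlam hα (by simpa using hlt.le)

/-- If all roots of `g` lie outside the open unit disc, `k > deg g`, `|λ| = 1` and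
`f(x) = λ xᵏ ḡ(1/x)`, then for any `α, β ∈ ℂ` not both zero,
`m(α f + β g) = m(g) + log max{|α|, |β|}`. -/
theorem mahler_alpha_f_add_beta_g (g f : Polynomial ℂ) (hg : g ≠ 0)
    (hroots : ∀ z : ℂ, g.eval z = 0 → 1 ≤ ‖z‖)
    (k : ℕ) (hk : g.natDegree < k) (lam : ℂ) (hlam : ‖lam‖ = 1)
    (hf : f = Polynomial.C lam *
      ∑ j ∈ Finset.range (g.natDegree + 1),
        Polynomial.C ((starRingEnd ℂ) (g.coeff j)) * Polynomial.X ^ (k - j))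
    (α β : ℂ) (hαβ : ¬(α = 0 ∧ β = 0)) :
    (1 / (2 * Real.pi)) *
        ∫ θ in (0:ℝ)..(2 * Real.pi),
          Real.log (‖(Polynomial.C α * f + Polynomial.C β * g).eval (circ θ)‖)
      = (1 / (2 * Real.pi)) *
          ∫ θ in (0:ℝ)..(2 * Real.pi), Real.log (‖g.eval (circ θ)‖)
        + Real.log (max (‖α‖) (‖β‖)) :=
  mahler_alpha_f_add_beta_g_general g f hroots k hk lam hlam hf α β hαβ
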